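/- Let B be an n × n complex positive semidefinite matrix. The function g(Y) = log det(Y + B) − log det(Y), where det denotes the (real, positive) determinant of a Hermitian positive definite matrix, is convex on the convex set of n × n Hermitian positive definite matrices: for all Hermitian positive definite Y₁, Y₂ and all θ ∈ [0,1], g(θY₁ + (1−θ)Y₂) ≤ θ·g(Y₁) + (1−θ)·g(Y₂). -/

import Mathlib

/-! Write `L_Y(s) = log det (Y + s B)`, so that `g(Y) = L_Y(1) - L_Y(0)`. By Jacobi's formula
`L_Y'(s) = re tr ((Y + s B)⁻¹ B)`, and this is convex in `Y`: inversion is operator convex on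
positive definite matrices (a Schur complement argument on the blocks `[[Y, 1], [1, Y⁻¹]]`), and
`tr (P B) ≥ 0` for positive semidefinite `P` and `B`. Hence for `Y = θ Y₁ + (1 - θ) Y₂` the function
`θ L_{Y₁} + (1 - θ) L_{Y₂} - L_Y` vanishes at `0` and is nondecreasing on `[0, 1]`. -/

open Matrix ComplexOrder
open scoped MatrixOrder

namespace Matrix

variable {m : Type*}

theorem convex_setOf_posDef : Convex ℝ {A : Matrix m m ℂ | A.PosDef} := by
  intro A₁ h₁ A₂ h₂ a b ha hb hab
  rcases ha.eq_or_lt with rfl | ha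
  · rw [zero_add] at hab
    simpa [hab] using h₂
  · exact (h₁.smul ha).add_posSemidef (h₂.posSemidef.smul hb)

variable [Fintype m] [DecidableEq m]

theorem PosSemidef.trace_mul_nonneg {P B : Matrix m m ℂ} (hP : P.PosSemidef)
    (hB : B.PosSemidef) : 0 ≤ (P * B).trace := by
  obtain ⟨A, rfl⟩ := CStarAlgebra.nonneg_iff_eq_star_mul_self.mp hP.nonneg
  rw [mul_assoc, trace_mul_comm]
  exact (hB.mul_mul_conjTranspose_same A).trace_nonneg

theorem PosDef.posSemidef_fromBlocks_one_inv {A : Matrix m m ℂ} (hA : A.PosDef) :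
    (fromBlocks A 1 1 A⁻¹).PosSemidef := by
  have := hA.isUnit.invertible
  simpa using (PosDef.fromBlocks₁₁ (1 : Matrix m m ℂ) A⁻¹ hA).mpr (by simpa using .zero)

theorem convexOn_inv : ConvexOn ℝ {A : Matrix m m ℂ | A.PosDef} Inv.inv := by
  refine ⟨convex_setOf_posDef, fun A₁ h₁ A₂ h₂ a b ha hb hab => ?_⟩
  have hA : (a • A₁ + b • A₂).PosDef := convex_setOf_posDef h₁ h₂ ha hb hab
  have hblocks : (fromBlocks (a • A₁ + b • A₂) 1 1 (a • A₁⁻¹ + b • A₂⁻¹)).PosSemidef := by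
    convert (h₁.posSemidef_fromBlocks_one_inv.smul ha).add
      (h₂.posSemidef_fromBlocks_one_inv.smul hb) using 1
    rw [fromBlocks_smul, fromBlocks_smul, fromBlocks_add, ← add_smul, hab, one_smul]
  have := hA.isUnit.invertible
  rw [le_iff]
  simpa using
    (PosDef.fromBlocks₁₁ (1 : Matrix m m ℂ) (a • A₁⁻¹ + b • A₂⁻¹) hA).mp (by simpa using hblocks)

theorem convexOn_re_trace_inv_mul {B : Matrix m m ℂ} (hB : B.PosSemidef) :
    ConvexOn ℝ {A : Matrix m m ℂ | A.PosDef} fun A => (A⁻¹ * B).trace.re := by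
  refine ⟨convex_setOf_posDef, fun A₁ h₁ A₂ h₂ a b ha hb hab => ?_⟩
  have h := (Complex.le_def.mp ((convexOn_inv.2 h₁ h₂ ha hb hab).trace_mul_nonneg hB)).1
  simpa [sub_mul, add_mul, trace_sub, trace_add, smul_mul, trace_smul] using h

theorem hasDerivAt_det_one_add_smul {𝕜 : Type*} [NontriviallyNormedField 𝕜] (M : Matrix m m 𝕜) :
    HasDerivAt (fun t : 𝕜 => (1 + t • M).det) M.trace 0 := by
  have h := (det (1 + (Polynomial.X : Polynomial 𝕜) • M.map Polynomial.C)).hasDerivAt 0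
  rw [derivative_det_one_add_X_smul] at h
  convert h using 2 with t
  simp [eval_det, ← smul_eq_mul_diagonal]

theorem hasDerivAt_det_add_smul {𝕜 : Type*} [NontriviallyNormedField 𝕜] (Y B : Matrix m m 𝕜)
    {t₀ : 𝕜} (h : IsUnit (Y + t₀ • B).det) :
    HasDerivAt (fun t => (Y + t • B).det)
      ((Y + t₀ • B).det * ((Y + t₀ • B)⁻¹ * B).trace) t₀ := by
  set A := Y + t₀ • B
  have hfactor : ∀ t, Y + t • B = A * (1 + (t - t₀) • (A⁻¹ * B)) := fun t => by
    rw [mul_add, mul_one, Matrix.mul_smul, ← Matrix.mul_assoc, mul_nonsing_inv _ h,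
      Matrix.one_mul]
    module
  simp_rw [hfactor, det_mul]
  have h₀ := hasDerivAt_det_one_add_smul (A⁻¹ * B)
  rw [← sub_self t₀] at h₀
  exact (h₀.comp_sub_const t₀ t₀).const_mul A.det

theorem hasDerivAt_log_re_det_add_smul {Y B : Matrix m m ℂ} {s : ℝ} (h : (Y + s • B).PosDef) :
    HasDerivAt (fun s : ℝ => Real.log (Y + s • B).det.re) ((Y + s • B)⁻¹ * B).trace.re s := by
  obtain ⟨hre, him⟩ := Complex.pos_iff.mp h.det_pos
  have hdet := (hasDerivAt_det_add_smul Y B (t₀ := (s : ℂ))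
    (by simpa [Complex.coe_smul] using h.det_pos.ne'.isUnit)).real_of_complex
  simp only [Complex.coe_smul] at hdet
  convert hdet.log hre.ne' using 1
  rw [Complex.mul_re, ← him, zero_mul, sub_zero]
  field_simp

theorem convexOn_log_re_det_add_sub_log_re_det {B : Matrix m m ℂ} (hB : B.PosSemidef) :
    ConvexOn ℝ {Y : Matrix m m ℂ | Y.PosDef}
      fun Y => Real.log (Y + B).det.re - Real.log Y.det.re := by
  refine ⟨convex_setOf_posDef, fun Y₁ h₁ Y₂ h₂ a b ha hb hab => ?_⟩
  have hpd {Y : Matrix m m ℂ} (hY : Y.PosDef) {s : ℝ} (hs : 0 ≤ s) : (Y + s • B).PosDef :=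
    hY.add_posSemidef (hB.smul hs)
  set Y := a • Y₁ + b • Y₂
  have hY : Y.PosDef := convex_setOf_posDef h₁ h₂ ha hb hab
  let L (Z : Matrix m m ℂ) (s : ℝ) : ℝ := Real.log (Z + s • B).det.re
  let D (Z : Matrix m m ℂ) (s : ℝ) : ℝ := ((Z + s • B)⁻¹ * B).trace.re
  have hderiv {s : ℝ} (hs : 0 ≤ s) : HasDerivAt (fun s => a * L Y₁ s + b * L Y₂ s - L Y s)
      (a * D Y₁ s + b * D Y₂ s - D Y s) s :=
    (((hasDerivAt_log_re_det_add_smul (hpd h₁ hs)).const_mul a).add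
      ((hasDerivAt_log_re_det_add_smul (hpd h₂ hs)).const_mul b)).sub
      (hasDerivAt_log_re_det_add_smul (hpd hY hs))
  have hD {s : ℝ} (hs : 0 ≤ s) : D Y s ≤ a * D Y₁ s + b * D Y₂ s := by
    have hcomb : a • (Y₁ + s • B) + b • (Y₂ + s • B) = Y + s • B := by
      rw [← sub_eq_zero]
      calc _ = (a + b - 1) • s • B := by module
        _ = 0 := by rw [hab, sub_self, zero_smul]
    simpa only [hcomb, smul_eq_mul] using
      (convexOn_re_trace_inv_mul hB).2 (hpd h₁ hs) (hpd h₂ hs) ha hb hab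
  have hmono : MonotoneOn (fun s => a * L Y₁ s + b * L Y₂ s - L Y s) (Set.Icc 0 1) :=
    monotoneOn_of_hasDerivWithinAt_nonneg (convex_Icc 0 1)
      (fun s hs => (hderiv hs.1).continuousAt.continuousWithinAt)
      (fun s hs => (hderiv (interior_subset hs).1).hasDerivWithinAt)
      (fun s hs => sub_nonneg.mpr (hD (interior_subset hs).1))
  have := hmono (Set.left_mem_Icc.mpr zero_le_one) (Set.right_mem_Icc.mpr zero_le_one) zero_le_one
  simp only [L, zero_smul, add_zero, one_smul] at this
  simp only [smul_eq_mul]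
  linarith

end Matrix

/-- For Hermitian positive definite `Y`, `det Y` is a positive real; we take its real
part to define `log det`. The function `g(Y) = log det(Y + B) − log det Y`, with `B`
positive semidefinite, is convex on the set of Hermitian positive definite matrices. -/
theorem logdet_ratio_convex_on_posdef
    (n : ℕ) (B : Matrix (Fin n) (Fin n) ℂ) (hB : B.PosSemidef)
    (Y₁ Y₂ : Matrix (Fin n) (Fin n) ℂ) (hY₁ : Y₁.PosDef) (hY₂ : Y₂.PosDef)
    (θ : ℝ) (hθ₀ : 0 ≤ θ) (hθ₁ : θ ≤ 1) :
    Real.log ((θ • Y₁ + (1 - θ) • Y₂ + B).det.re)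
        - Real.log ((θ • Y₁ + (1 - θ) • Y₂).det.re)
      ≤ θ * (Real.log ((Y₁ + B).det.re) - Real.log (Y₁.det.re))
        + (1 - θ) * (Real.log ((Y₂ + B).det.re) - Real.log (Y₂.det.re)) := by
  simpa only [smul_eq_mul] using (convexOn_log_re_det_add_sub_log_re_det hB).2
    hY₁ hY₂ hθ₀ (sub_nonneg.mpr hθ₁) (add_sub_cancel θ 1)
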